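/- arXiv:1507.02799 — 2 statements merged into one kernel-verified Lean document; each statement's English description precedes it below -/
import Mathlib

section
/- Let F be a fixed optimal shadows-minimal cover of T with the maximum number of twin links. Then no link of F overlaps another link of F; that is, there are no two distinct links ax, by ∈ F such that the paths P(ax) and P(by) share an edge and at least one of a, x lies on P(by). -/
open scoped Classical

namespace TAP

/-- A rooted tree on vertex set `V`, given by a parent function. -/
structure Tree (V : Type) where
  root : V
  parent : V → V
  parent_root : parent root = root
  reach : ∀ v, ∃ n, parent^[n] v = root

namespace Tree

variable {V : Type} (t : Tree V)

/-- `t.desc w v` : `v` lies in the rooted subtree `T_w`, i.e. `w` is an ancestor of `v` or `w = v`. -/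
def desc (w v : V) : Prop := ∃ n, t.parent^[n] v = w

/-- The depth of a node (its distance to the root). -/
noncomputable def depth (v : V) : ℕ :=
  @Nat.find (fun n => t.parent^[n] v = t.root) (Classical.decPred _) (t.reach v)

/-- `v` is a leaf of the tree: it is not the root and it has no children. -/
def IsLeaf (v : V) : Prop := v ≠ t.root ∧ ∀ u, u ≠ v → t.parent u ≠ v

/-- The tree edge `(w, parent w)` (for `w ≠ root`) lies on the tree path `P(u,v)`. -/
def onPath (w u v : V) : Prop :=
  (t.desc w u ∧ ¬ t.desc w v) ∨ (t.desc w v ∧ ¬ t.desc w u)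

/-- The node `c` lies on the tree path `P(u,v)`. -/
def onPathNode (c u v : V) : Prop :=
  (t.desc c u ∨ t.desc c v) ∧ ∀ w, t.desc w u → t.desc w v → t.desc w c

/-- `u` is the least common ancestor of `a` and `b`. -/
def IsLCA (u a b : V) : Prop :=
  t.desc u a ∧ t.desc u b ∧ ∀ w, t.desc w a → t.desc w b → t.desc w u

end Tree

variable {V : Type} [Fintype V] [DecidableEq V]

/-- The link `e` covers the tree edge `(w, parent w)`. -/
def covers (t : Tree V) (e : Sym2 V) (w : V) : Prop :=
  ∃ u v, e = s(u, v) ∧ t.onPath w u v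

/-- Some link of `F` covers the tree edge `(w, parent w)`. -/
def coveredBy (t : Tree V) (F : Finset (Sym2 V)) (w : V) : Prop :=
  ∃ e ∈ F, covers t e w

/-- `F` covers the tree: every tree edge is covered by some link of `F`
(equivalently, `T ∪ F` is 2-edge-connected). -/
def IsCover (t : Tree V) (F : Finset (Sym2 V)) : Prop :=
  ∀ w, w ≠ t.root → coveredBy t F w

/-- `e'` is a shadow of `e`, i.e. `P(e') ⊆ P(e)`. -/
def Shadow (t : Tree V) (e' e : Sym2 V) : Prop := ∀ w, covers t e' w → covers t e w

/-- `e'` is a proper shadow of `e`. -/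
def ProperShadow (t : Tree V) (e' e : Sym2 V) : Prop :=
  Shadow t e' e ∧ ∃ w, covers t e w ∧ ¬ covers t e' w

/-- The link set `E` is closed under shadows. -/
def ShadowClosed (t : Tree V) (E : Finset (Sym2 V)) : Prop :=
  ∀ e ∈ E, ∀ e' : Sym2 V, ¬ e'.IsDiag → Shadow t e' e → e' ∈ E

/-- `F` is an (inclusion-minimal) shadows-minimal cover: replacing any link of `F` by a
proper shadow of it destroys the covering property. -/
def ShadowsMinimal (t : Tree V) (F : Finset (Sym2 V)) : Prop :=
  IsCover t F ∧ (∀ e ∈ F, ¬ IsCover t (F.erase e)) ∧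
  ∀ e ∈ F, ∀ e' : Sym2 V, ProperShadow t e' e → ¬ IsCover t (insert e' (F.erase e))

/-- `deg Y x` : the number of links of `Y` incident to `x`. -/
noncomputable def deg (Y : Finset (Sym2 V)) (x : V) : ℕ := (Y.filter (fun e => x ∈ e)).card

/-! ### Contraction of a set of links -/

/-- `u` and `v` lie in the same 2-edge-connected component of `T ∪ I`,
i.e. they get identified in `T/I`. -/
def rel (t : Tree V) (I : Finset (Sym2 V)) (u v : V) : Prop :=
  ∀ w, w ≠ t.root → t.onPath w u v → coveredBy t I w

def relSetoid (t : Tree V) (I : Finset (Sym2 V)) : Setoid V where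
  r := rel t I
  iseqv := by
    refine ⟨?_, ?_, ?_⟩
    · intro u w _ hp
      rcases hp with ⟨h1, h2⟩ | ⟨h1, h2⟩ <;> exact absurd h1 h2
    · intro u v h w hw hp
      refine h w hw ?_
      rcases hp with ⟨h1, h2⟩ | ⟨h1, h2⟩
      · exact Or.inr ⟨h1, h2⟩
      · exact Or.inl ⟨h1, h2⟩
    · intro u v x h1 h2 w hw hp
      by_cases hv : t.desc w v
      · rcases hp with ⟨ha, hb⟩ | ⟨ha, hb⟩
        · exact h2 w hw (Or.inl ⟨hv, hb⟩)
        · exact h1 w hw (Or.inr ⟨hv, hb⟩)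
      · rcases hp with ⟨ha, hb⟩ | ⟨ha, hb⟩
        · exact h1 w hw (Or.inl ⟨ha, hv⟩)
        · exact h2 w hw (Or.inr ⟨ha, hv⟩)

/-- The node set of the contracted tree `T/I`. -/
abbrev QT (t : Tree V) (I : Finset (Sym2 V)) : Type := Quotient (relSetoid t I)

noncomputable instance instFintypeQT (t : Tree V) (I : Finset (Sym2 V)) : Fintype (QT t I) :=
  @Quotient.fintype V _ (relSetoid t I) (Classical.decRel _)

/-- The node of `T/I` corresponding to the node `x` of `T`. -/
def qm (t : Tree V) (I : Finset (Sym2 V)) (x : V) : QT t I := Quotient.mk (relSetoid t I) x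

/-- The class of `u` is a (possibly compound) leaf of `T/I`. -/
def qleafRep (t : Tree V) (I : Finset (Sym2 V)) (u : V) : Prop :=
  ¬ rel t I u t.root ∧ ∀ v, rel t I (t.parent v) u → rel t I v u

/-- The class of `u` lies in the rooted subtree of `T/I` rooted at the class of `v`. -/
def qdescRep (t : Tree V) (I : Finset (Sym2 V)) (v u : V) : Prop :=
  ∃ w, t.desc w u ∧ rel t I w v

/-- The class of `u` is a compound node of `T/I` (a contracted component, or the root). -/
def qcompoundRep (t : Tree V) (I : Finset (Sym2 V)) (u : V) : Prop :=
  (∃ w, w ≠ u ∧ rel t I u w) ∨ rel t I u t.root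

/-- The node `x` of `T` lies in the rooted subtree of `T/I` whose root is the class `c`. -/
def inT (t : Tree V) (I : Finset (Sym2 V)) (c : QT t I) (x : V) : Prop :=
  qdescRep t I c.out x

/-- The node `d` of `T/I` lies in the rooted subtree of `T/I` whose root is `c`. -/
def below (t : Tree V) (I : Finset (Sym2 V)) (c d : QT t I) : Prop := inT t I c d.out

/-- The class of `x` is matched by the matching `M`. -/
def matchedRep (t : Tree V) (I M : Finset (Sym2 V)) (x : V) : Prop :=
  ∃ e ∈ M, ∃ z, z ∈ e ∧ rel t I z x

/-- The class of `x` lies on the path of `T/I` between the classes of `u` and of `v`. -/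
def qOnPathNode (t : Tree V) (I : Finset (Sym2 V)) (x u v : V) : Prop :=
  (qdescRep t I x u ∨ qdescRep t I x v) ∧
  ∀ w, qdescRep t I w u → qdescRep t I w v → qdescRep t I w x

/-- The class of `x` is the least common ancestor in `T/I` of the classes of `a` and `b`. -/
def qIsLCA (t : Tree V) (I : Finset (Sym2 V)) (x a b : V) : Prop :=
  qdescRep t I x a ∧ qdescRep t I x b ∧
  ∀ w, qdescRep t I w a → qdescRep t I w b → qdescRep t I w x

/-- Depth of the class of `x` in `T/I`. -/
noncomputable def qdepth (t : Tree V) (I : Finset (Sym2 V)) (x : V) : ℕ :=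
  (Finset.univ.filter (fun w => w ≠ t.root ∧ ¬ coveredBy t I w ∧ t.desc w x)).card

/-- `u` is an up-node of (the class of) `a` in `T/I` : among all links of `E` leaving the
class of `a`, some link from the class of `a` to `u` has its other end as close as possible
to the root. -/
def qUpNode (t : Tree V) (I E : Finset (Sym2 V)) (a u : V) : Prop :=
  (∃ b, rel t I b a ∧ s(b, u) ∈ E) ∧ ¬ rel t I u a ∧
  ∀ b x, rel t I b a → s(b, x) ∈ E → ¬ rel t I x a → qdepth t I u ≤ qdepth t I x

/-- `s(a,b)` is a twin link of `T/I` : a link of `E` between two distinct leaves of `T/I`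
whose contraction results in a new leaf. -/
def qTwinAt (t : Tree V) (I E : Finset (Sym2 V)) (a b : V) : Prop :=
  qleafRep t I a ∧ qleafRep t I b ∧ ¬ rel t I a b ∧ s(a, b) ∈ E ∧
  qleafRep t (insert (s(a, b)) I) a

/-- The class of `x` is a stem of `T/I` : the least common ancestor of the two ends
of a twin link. -/
def qStem (t : Tree V) (I E : Finset (Sym2 V)) (x : V) : Prop :=
  ∃ a b, qTwinAt t I E a b ∧ qIsLCA t I x a b

/-! ### Twin links, stems, up-links and locked leaves in the original tree -/

/-- `a` and `b` are twins: two leaves such that the contraction of the link `ab`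
results in a new leaf. -/
def TwinPair (t : Tree V) (a b : V) : Prop :=
  t.IsLeaf a ∧ t.IsLeaf b ∧ a ≠ b ∧ qleafRep t {s(a, b)} a

/-- `e` is a twin link. -/
def IsTwinLinkE (t : Tree V) (e : Sym2 V) : Prop := ∃ a b, e = s(a, b) ∧ TwinPair t a b

/-- `x` is a stem: the least common ancestor of two twins. -/
def IsStem (t : Tree V) (E : Finset (Sym2 V)) (x : V) : Prop :=
  ∃ a b, TwinPair t a b ∧ s(a, b) ∈ E ∧ t.IsLCA x a b

noncomputable def stems (t : Tree V) (E : Finset (Sym2 V)) : Finset V :=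
  Finset.univ.filter (IsStem t E)

/-- `X = V \ (L ∪ S)`. -/
noncomputable def Xset (t : Tree V) (E : Finset (Sym2 V)) : Finset V :=
  Finset.univ.filter (fun x => ¬ t.IsLeaf x ∧ ¬ IsStem t E x)

/-- `s(a,u)` is the up-link of `a` : among all links of `E` at `a`, its other end `u` is
as close as possible to the root (`u` is the up-node of `a`). -/
def IsUpLink (t : Tree V) (E : Finset (Sym2 V)) (a u : V) : Prop :=
  s(a, u) ∈ E ∧ ∀ x, s(a, x) ∈ E → t.depth u ≤ t.depth x

/-- The rooted subtree `T_v` is `a`-closed: it contains the up-node of `a`. -/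
def AClosed (t : Tree V) (E : Finset (Sym2 V)) (v a : V) : Prop :=
  ∀ u, IsUpLink t E a u → t.desc v u

/-- The rooted proper subtree `T_v` witnesses that the leaf `a` is locked by the link `bb'` :
`L(T_v) = {a,b,b'}`, `ab` is a twin link and `T_v` is `a`-closed. -/
def LocksAt (t : Tree V) (E : Finset (Sym2 V)) (b b' a v : V) : Prop :=
  v ≠ t.root ∧ s(b, b') ∈ E ∧ b ≠ b' ∧ b' ≠ a ∧
  {x | t.IsLeaf x ∧ t.desc v x} = {a, b, b'} ∧
  TwinPair t a b ∧ s(a, b) ∈ E ∧ AClosed t E v a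

/-- The leaf `a` is locked by the link `bb'`. -/
def Locks (t : Tree V) (E : Finset (Sym2 V)) (b b' a : V) : Prop :=
  ∃ v, LocksAt t E b b' a v

def IsLockedLeaf (t : Tree V) (E : Finset (Sym2 V)) (a : V) : Prop :=
  ∃ b b', Locks t E b b' a

def IsLockingLink (t : Tree V) (E : Finset (Sym2 V)) (e : Sym2 V) : Prop :=
  ∃ b b' a, e = s(b, b') ∧ Locks t E b b' a

/-- `T_v` is the locking tree of `a` (with locking link `bb'`): the minimal rooted subtree
witnessing the lock. -/
def IsLockingTree (t : Tree V) (E : Finset (Sym2 V)) (a b b' v : V) : Prop :=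
  LocksAt t E b b' a v ∧ ∀ v', LocksAt t E b b' a v' → t.desc v' v

/-! ### The fixed optimal cover `F` -/

noncomputable def twinCount (t : Tree V) (F : Finset (Sym2 V)) : ℕ :=
  (F.filter (fun e => IsTwinLinkE t e)).card

/-- `F` is an optimal (minimum-size) shadows-minimal cover of `T` with the maximum
number of twin links. -/
def IsGoodCover (t : Tree V) (E F : Finset (Sym2 V)) : Prop :=
  F ⊆ E ∧ ShadowsMinimal t F ∧
  (∀ F' : Finset (Sym2 V), F' ⊆ E → IsCover t F' → F.card ≤ F'.card) ∧
  (∀ F' : Finset (Sym2 V), F' ⊆ E → ShadowsMinimal t F' → F'.card = F.card →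
    twinCount t F' ≤ twinCount t F)

/-! ### Matchings and the lower bound -/

def IsMatching (M : Finset (Sym2 V)) : Prop :=
  (∀ e ∈ M, ¬ e.IsDiag) ∧ ∀ e ∈ M, ∀ f ∈ M, e ≠ f → ∀ x, x ∈ e → x ∉ f

/-- `E(L,L)` : the links of `E` joining two leaves. -/
noncomputable def leafLinks (t : Tree V) (E : Finset (Sym2 V)) : Finset (Sym2 V) :=
  E.filter (fun e => ∀ x ∈ e, t.IsLeaf x)

/-- `W` : the set of twin links and locking links. -/
noncomputable def Wlinks (t : Tree V) (E : Finset (Sym2 V)) : Finset (Sym2 V) :=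
  E.filter (fun e => IsTwinLinkE t e ∨ IsLockingLink t E e)

/-- `M` is a maximum matching in `E(L,L) \ W`. -/
def IsMaxLeafMatching (t : Tree V) (E M : Finset (Sym2 V)) : Prop :=
  M ⊆ leafLinks t E \ Wlinks t E ∧ IsMatching M ∧
  ∀ M' : Finset (Sym2 V), M' ⊆ leafLinks t E \ Wlinks t E → IsMatching M' → M'.card ≤ M.card

/-- `U` : the set of leaves unmatched by `M`. -/
noncomputable def unmatchedLeaves (t : Tree V) (M : Finset (Sym2 V)) : Finset V :=
  Finset.univ.filter (fun a => t.IsLeaf a ∧ ∀ e ∈ M, a ∉ e)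

/-- `M_F = F(L,L) \ W`. -/
noncomputable def MFlinks (t : Tree V) (E F : Finset (Sym2 V)) : Finset (Sym2 V) :=
  (F.filter (fun e => ∀ x ∈ e, t.IsLeaf x)) \ Wlinks t E

/-- `N = {bb' ∈ M : each of b, b' is unmatched by M_F}`. -/
noncomputable def Nlinks (t : Tree V) (E F M : Finset (Sym2 V)) : Finset (Sym2 V) :=
  M.filter (fun e => ∀ b ∈ e, ∀ f ∈ MFlinks t E F, b ∉ f)

/-- `J` : the set of links of `F` not incident to a locked leaf. -/
noncomputable def Jlinks (t : Tree V) (E F : Finset (Sym2 V)) : Finset (Sym2 V) :=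
  F.filter (fun e => ∀ x ∈ e, ¬ IsLockedLeaf t E x)

/-- The lower bound `(3/2)|M| + |U| + (1/2)|N| + (1/2) Σ_{x ∈ X} d_J(x)`. -/
noncomputable def LB (t : Tree V) (E F M : Finset (Sym2 V)) : ℚ :=
  (3 / 2 : ℚ) * (M.card : ℚ) + ((unmatchedLeaves t M).card : ℚ)
    + (1 / 2 : ℚ) * ((Nlinks t E F M).card : ℚ)
    + (1 / 2 : ℚ) * ∑ x ∈ Xset t E, (deg (Jlinks t E F) x : ℚ)

/-! ### Subtrees of `T/I`, semi-closed trees, credits -/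

/-- `T'` (the rooted subtree of `T/I` with root `c`) is `M`-compatible. -/
def MCompatible (t : Tree V) (I M : Finset (Sym2 V)) (c : QT t I) : Prop :=
  ∀ e ∈ M, (∀ x ∈ e, inT t I c x) ∨ (∀ x ∈ e, ¬ inT t I c x)

/-- `T'` is semi-closed (w.r.t. `M`): `M`-compatible and closed w.r.t. its unmatched leaves. -/
def SemiClosedQ (t : Tree V) (I E M : Finset (Sym2 V)) (c : QT t I) : Prop :=
  MCompatible t I M c ∧
  ∀ x y, s(x, y) ∈ E → inT t I c x → qleafRep t I x → ¬ matchedRep t I M x → inT t I c y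

/-- `T'` is minimally semi-closed. -/
def MinSemiClosedQ (t : Tree V) (I E M : Finset (Sym2 V)) (c : QT t I) : Prop :=
  SemiClosedQ t I E M c ∧
  ∀ c' : QT t I, below t I c c' → c' ≠ c → ¬ SemiClosedQ t I E M c'

/-- `I'` is an exact cover of `T'` : the set of edges of `T/I` covered by `I'` is exactly
the edge set of `T'`. -/
def IsExactCoverQ (t : Tree V) (I : Finset (Sym2 V)) (c : QT t I) (I' : Finset (Sym2 V)) : Prop :=
  ∀ w, w ≠ t.root → ¬ coveredBy t I w → (coveredBy t I' w ↔ inT t I c (t.parent w))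

/-- `up(U')` : the set of up-links of the unmatched leaves of `T'`. -/
noncomputable def upOfQ (t : Tree V) (I E M : Finset (Sym2 V)) (c : QT t I) :
    Finset (Sym2 V) :=
  E.filter (fun e => ∃ a u, e = s(a, u) ∧ inT t I c a ∧ qleafRep t I a ∧
    ¬ matchedRep t I M a ∧ qUpNode t I E a u)

/-- `M` is a matching on the leaves of `T/I`. -/
def IsLeafMatchingQ (t : Tree V) (I M : Finset (Sym2 V)) : Prop :=
  (∀ e ∈ M, ∃ a b, e = s(a, b) ∧ qleafRep t I a ∧ qleafRep t I b ∧ ¬ rel t I a b) ∧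
  ∀ e ∈ M, ∀ f ∈ M, e ≠ f → ∀ x, x ∈ e → ∀ y, y ∈ f → ¬ rel t I x y

/-- `L' = L(T')` as a set of nodes of `T/I`. -/
noncomputable def LsetQ (t : Tree V) (I : Finset (Sym2 V)) (c : QT t I) : Finset (QT t I) :=
  Finset.univ.filter (fun d => below t I c d ∧ qleafRep t I d.out)

/-- `U'` : the `M`-unmatched leaves of `T'`. -/
noncomputable def UsetQ (t : Tree V) (I M : Finset (Sym2 V)) (c : QT t I) : Finset (QT t I) :=
  Finset.univ.filter
    (fun d => below t I c d ∧ qleafRep t I d.out ∧ ¬ matchedRep t I M d.out)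

/-- `C'` : the non-leaf compound nodes of `T'`. -/
noncomputable def CsetQ (t : Tree V) (I : Finset (Sym2 V)) (c : QT t I) : Finset (QT t I) :=
  Finset.univ.filter
    (fun d => below t I c d ∧ qcompoundRep t I d.out ∧ ¬ qleafRep t I d.out)

/-- `M' = M(T')` : the links of `M` with both ends in `T'`. -/
noncomputable def MlinksQ (t : Tree V) (I M : Finset (Sym2 V)) (c : QT t I) :
    Finset (Sym2 V) :=
  M.filter (fun e => ∀ x ∈ e, inT t I c x)

/-- `S'` : the stems of `T'`. -/
noncomputable def SsetQ (t : Tree V) (I E : Finset (Sym2 V)) (c : QT t I) : Finset (QT t I) :=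
  Finset.univ.filter (fun d => below t I c d ∧ qStem t I E d.out)

/-- `S'_1` : the stems of `T'` whose twin link lies in `F`. -/
noncomputable def S1setQ (t : Tree V) (I E F : Finset (Sym2 V)) (c : QT t I) :
    Finset (QT t I) :=
  Finset.univ.filter (fun d => below t I c d ∧
    ∃ a b, qTwinAt t I E a b ∧ s(a, b) ∈ F ∧ qIsLCA t I d.out a b)

/-- `X'` : the original nodes of `T'` lying in `X`. -/
noncomputable def XsetQ (t : Tree V) (I E : Finset (Sym2 V)) (c : QT t I) : Finset (QT t I) :=
  Finset.univ.filter
    (fun d => below t I c d ∧ ¬ qcompoundRep t I d.out ∧ d.out ∈ Xset t E)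

/-- `tickets(T') = |N(T')| + Σ_{x ∈ X'} d_J(x)`. -/
noncomputable def ticketsQ (t : Tree V) (I E F M : Finset (Sym2 V)) (c : QT t I) : ℕ :=
  ((Nlinks t E F M).filter (fun e => ∀ x ∈ e, inT t I c x)).card
    + ∑ d ∈ XsetQ t I E c, deg (Jlinks t E F) d.out

/-- `coupons(T')` : one coupon for each unmatched leaf and each compound node of `T'`,
and `3/2` coupons for each link of `M(T')`. -/
noncomputable def couponsQ (t : Tree V) (I M : Finset (Sym2 V)) (c : QT t I) : ℚ :=
  ((Finset.univ.filter (fun d : QT t I => below t I c d ∧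
      ((qleafRep t I d.out ∧ ¬ matchedRep t I M d.out) ∨ qcompoundRep t I d.out))).card : ℚ)
    + (3 / 2 : ℚ) * ((MlinksQ t I M c).card : ℚ)

/-- `credit(T') = coupons(T') + tickets(T')/2`. -/
noncomputable def creditQ (t : Tree V) (I E F M : Finset (Sym2 V)) (c : QT t I) : ℚ :=
  couponsQ t I M c + (ticketsQ t I E F M c : ℚ) / 2

/-- `T'` is deficient: `credit(T') < |U'| + |M'| + 1`. -/
def DeficientQ (t : Tree V) (I E F M : Finset (Sym2 V)) (c : QT t I) : Prop :=
  creditQ t I E F M c < ((UsetQ t I M c).card : ℚ) + ((MlinksQ t I M c).card : ℚ) + 1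

/-! ### Invariants and greedy steps -/

/-- Credit Invariant: the credit of every subtree of `T/I` is distributed as described:
coupons on unmatched leaves, compound nodes and links of `M`, tickets on links of `N` and
original nodes of `X`. -/
def CreditInvariant (t : Tree V) (E F M I : Finset (Sym2 V)) : Prop :=
  F ⊆ E ∧ M ⊆ E ∧
  ∀ c : QT t I, creditQ t I E F M c = couponsQ t I M c + (ticketsQ t I E F M c : ℚ) / 2

/-- Degree in `T/I` : the number of links of `F` with exactly one end in the class of `x`. -/
noncomputable def qdegQ (t : Tree V) (I F : Finset (Sym2 V)) (x : V) : ℕ :=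
  (F.filter (fun e => (∃ z, z ∈ e ∧ rel t I z x) ∧ ∃ z, z ∈ e ∧ ¬ rel t I z x)).card

/-- Matching Invariant: `M` is a matching on the leaves of `T/I` and `d_F(b) = 1` for
every leaf `b` of `T/I` matched by `M`. -/
def MatchingInvariant (t : Tree V) (F M I : Finset (Sym2 V)) : Prop :=
  IsLeafMatchingQ t I M ∧ ∀ e ∈ M, ∀ b, b ∈ e → qdegQ t I F b = 1

/-- A greedy locking-tree contraction step. -/
def LockStep (t : Tree V) (E M : Finset (Sym2 V)) (I I₂ : Finset (Sym2 V)) : Prop :=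
  ∃ a b b' v u,
    IsLockingTree t E a b b' v ∧
    (∀ e ∈ M, a ∉ e) ∧ (∀ e ∈ M, b ∉ e) ∧ (∀ e ∈ M, b' ∉ e) ∧
    (∀ c c' v', IsLockingTree t E b c c' v' → t.desc v v') ∧
    IsUpLink t E a u ∧ I₂ = I ∪ {s(b, b'), s(a, u)}

/-- A greedy link contraction step: contract a link of `E` joining two `M`-unmatched
leaves of `T/I`. -/
def LinkStep (t : Tree V) (E M : Finset (Sym2 V)) (I I₂ : Finset (Sym2 V)) : Prop :=
  ∃ x y, s(x, y) ∈ E ∧ ¬ rel t I x y ∧ qleafRep t I x ∧ qleafRep t I y ∧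
    ¬ matchedRep t I M x ∧ ¬ matchedRep t I M y ∧ I₂ = insert (s(x, y)) I

/-- Contraction of a semi-closed tree with an exact cover. -/
def SemiStep (t : Tree V) (E M : Finset (Sym2 V)) (I I₂ : Finset (Sym2 V)) : Prop :=
  ∃ (c : QT t I) (I' : Finset (Sym2 V)), I' ⊆ E ∧ SemiClosedQ t I E M c ∧
    IsExactCoverQ t I c I' ∧ I₂ = I ∪ I'

/-- A sequence of greedy locking-tree contractions starting from the empty partial solution. -/
inductive LockPhase {V : Type} [Fintype V] [DecidableEq V]
    (t : Tree V) (E M : Finset (Sym2 V)) : Finset (Sym2 V) → Prop where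
  | base : LockPhase t E M ∅
  | step {I I₂ : Finset (Sym2 V)} :
      LockPhase t E M I → LockStep t E M I I₂ → LockPhase t E M I₂

/-- Partial Solution Invariant: `I` is obtained by first exhausting greedy locking-tree
contractions, and then sequentially applying greedy link contractions or contractions of
semi-closed trees with exact covers. -/
inductive PSI {V : Type} [Fintype V] [DecidableEq V]
    (t : Tree V) (E M : Finset (Sym2 V)) : Finset (Sym2 V) → Prop where
  | start {I : Finset (Sym2 V)} :
      LockPhase t E M I → (∀ I₂, ¬ LockStep t E M I I₂) → PSI t E M I
  | link {I I₂ : Finset (Sym2 V)} : PSI t E M I → LinkStep t E M I I₂ → PSI t E M I₂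
  | semi {I I₂ : Finset (Sym2 V)} : PSI t E M I → SemiStep t E M I I₂ → PSI t E M I₂

/-! ### Dangerous trees -/

/-- The witness structure of a 3-leaf dangerous tree: `a` is the unmatched leaf,
`b, b'` are the matched leaves, `ab' ∈ E`, the contraction of `ab'` does not create a new
leaf, and `T'` is `b`-open. -/
def Witness3 (t : Tree V) (I E M : Finset (Sym2 V)) (c : QT t I) (a b b' : V) : Prop :=
  inT t I c a ∧ inT t I c b ∧ inT t I c b' ∧
  qleafRep t I a ∧ qleafRep t I b ∧ qleafRep t I b' ∧
  ¬ rel t I a b ∧ ¬ rel t I a b' ∧ ¬ rel t I b b' ∧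
  ¬ matchedRep t I M a ∧ matchedRep t I M b ∧ matchedRep t I M b' ∧
  (∃ x y, s(x, y) ∈ E ∧ rel t I x a ∧ rel t I y b' ∧
    ¬ qleafRep t (insert (s(x, y)) I) x) ∧
  (∃ u, qUpNode t I E b u ∧ ¬ inT t I c u)

/-- A 3-leaf dangerous tree. -/
def Dangerous3 (t : Tree V) (I E M : Finset (Sym2 V)) (c : QT t I) : Prop :=
  SemiClosedQ t I E M c ∧ (CsetQ t I c).card = 0 ∧ (MlinksQ t I M c).card = 1 ∧
  (LsetQ t I c).card = 3 ∧ (SsetQ t I E c).card = 0 ∧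
  ∃ a b b', Witness3 t I E M c a b b'

/-- A dangerous tree: a 3-leaf dangerous tree, or a 4-leaf tree with one stem, exactly one
twin of which is matched, such that contracting the twin link yields a 3-leaf dangerous tree. -/
def Dangerous (t : Tree V) (I E M : Finset (Sym2 V)) (c : QT t I) : Prop :=
  Dangerous3 t I E M c ∨
  (SemiClosedQ t I E M c ∧ (CsetQ t I c).card = 0 ∧ (MlinksQ t I M c).card = 1 ∧
    (LsetQ t I c).card = 4 ∧ (SsetQ t I E c).card = 1 ∧
    ∃ a b, qTwinAt t I E a b ∧ inT t I c a ∧ inT t I c b ∧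
      (matchedRep t I M a ↔ ¬ matchedRep t I M b) ∧
      Dangerous3 t (insert (s(a, b)) I) E M (qm t (insert (s(a, b)) I) c.out))

/-! ### The switching construction -/

/-- `W̃` : for every 4-leaf minimally semi-closed (dangerous) tree of `T/I`, its twin link. -/
noncomputable def Wtil (t : Tree V) (I E M : Finset (Sym2 V)) : Finset (Sym2 V) :=
  E.filter (fun e => ∃ (a b : V) (c : QT t I), e = s(a, b) ∧ MinSemiClosedQ t I E M c ∧
    (LsetQ t I c).card = 4 ∧ qTwinAt t I E a b ∧ inT t I c a ∧ inT t I c b)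

/-- The canonical ordering witness of a 3-leaf dangerous tree: if both orderings of the
matched leaves qualify, the up-node of `b` is an ancestor of the up-node of `b'`. -/
def Witness3Canon (t : Tree V) (I E M : Finset (Sym2 V)) (c : QT t I) (a b b' : V) : Prop :=
  Witness3 t I E M c a b b' ∧
  (Witness3 t I E M c a b' b →
    ∃ u u', qUpNode t I E b u ∧ qUpNode t I E b' u' ∧ qdescRep t I u u')

/-- `M̃` is obtained from `M` by switching, in each (3-leaf dangerous) tree `D̃` of `T̃`
corresponding to a minimally semi-closed tree of `T/I`, the matching link `bb'` to `ab'`. -/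
def SwitchedMatching (t : Tree V) (I E M Mt : Finset (Sym2 V)) : Prop :=
  ∀ e : Sym2 V, e ∈ Mt ↔
    ((e ∈ M ∧ ∀ c : QT t I, MinSemiClosedQ t I E M c →
        ∀ x, x ∈ e → ¬ inT t (I ∪ Wtil t I E M) (qm t (I ∪ Wtil t I E M) c.out) x) ∨
     (∃ (c : QT t I) (a b b' x y : V), MinSemiClosedQ t I E M c ∧
        Witness3Canon t (I ∪ Wtil t I E M) E M (qm t (I ∪ Wtil t I E M) c.out) a b b' ∧
        e = s(x, y) ∧ e ∈ E ∧ rel t (I ∪ Wtil t I E M) x a ∧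
        rel t (I ∪ Wtil t I E M) y b' ∧
        ¬ qleafRep t (insert e (I ∪ Wtil t I E M)) x))

/-! ### Auxiliary lemmas for `no_overlap` -/

section NoOverlapAux

variable (t : Tree V)

lemma desc_refl' (v : V) : t.desc v v := ⟨0, rfl⟩

lemma desc_trans' {u v w : V} (h1 : t.desc u v) (h2 : t.desc w u) : t.desc w v := by
  obtain ⟨m, hm⟩ := h1
  obtain ⟨n, hn⟩ := h2
  exact ⟨n + m, by rw [Function.iterate_add_apply, hm, hn]⟩

lemma iterate_root' (n : ℕ) : t.parent^[n] t.root = t.root := by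
  induction n with
  | zero => rfl
  | succ k ih => rw [Function.iterate_succ_apply, t.parent_root, ih]

lemma desc_root' (v : V) : t.desc t.root v := t.reach v

lemma depth_spec' (v : V) : t.parent^[t.depth v] v = t.root :=
  @Nat.find_spec (fun n => t.parent^[n] v = t.root) (Classical.decPred _) (t.reach v)

lemma depth_le' {v : V} {n : ℕ} (h : t.parent^[n] v = t.root) : t.depth v ≤ n :=
  @Nat.find_le n (fun n => t.parent^[n] v = t.root) (Classical.decPred _) (t.reach v) h

lemma depth_parent_lt' {v : V} (h : v ≠ t.root) : t.depth (t.parent v) < t.depth v := by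
  have hs := depth_spec' t v
  cases hd : t.depth v with
  | zero => rw [hd] at hs; exact absurd hs h
  | succ k =>
    rw [hd, Function.iterate_succ_apply] at hs
    exact Nat.lt_succ_of_le (depth_le' t hs)

lemma depth_parent_le' (v : V) : t.depth (t.parent v) ≤ t.depth v := by
  by_cases h : v = t.root
  · rw [h, t.parent_root]
  · exact (depth_parent_lt' t h).le

lemma depth_iterate_le' (n : ℕ) (v : V) : t.depth (t.parent^[n] v) ≤ t.depth v := by
  induction n with
  | zero => exact le_rfl
  | succ k ih =>
    rw [Function.iterate_succ_apply']
    exact le_trans (depth_parent_le' t _) ih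

lemma desc_depth_le' {w v : V} (h : t.desc w v) : t.depth w ≤ t.depth v := by
  obtain ⟨n, hn⟩ := h
  rw [← hn]
  exact depth_iterate_le' t n v

lemma desc_antisymm' {u v : V} (h1 : t.desc u v) (h2 : t.desc v u) : u = v := by
  obtain ⟨n, hn⟩ := h1
  by_cases hv : v = t.root
  · subst hv; rw [iterate_root'] at hn; exact hn.symm
  · cases n with
    | zero => exact hn.symm
    | succ k =>
      exfalso
      have hlt : t.depth u < t.depth v := by
        rw [← hn, Function.iterate_succ_apply]
        exact lt_of_le_of_lt (depth_iterate_le' t k _) (depth_parent_lt' t hv)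
      exact absurd (desc_depth_le' t h2) (not_le.mpr hlt)

lemma desc_comparable' {u w v : V} (h1 : t.desc u v) (h2 : t.desc w v) :
    t.desc u w ∨ t.desc w u := by
  obtain ⟨m, hm⟩ := h1
  obtain ⟨k, hk⟩ := h2
  rcases le_total m k with h | h
  · exact Or.inr ⟨k - m, by
      rw [← hm, ← Function.iterate_add_apply, Nat.sub_add_cancel h, hk]⟩
  · exact Or.inl ⟨m - k, by
      rw [← hk, ← Function.iterate_add_apply, Nat.sub_add_cancel h, hm]⟩

lemma lca_ex' (a b : V) : ∃ n, t.desc (t.parent^[n] a) b := by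
  obtain ⟨n, hn⟩ := t.reach a
  exact ⟨n, hn ▸ desc_root' t b⟩

noncomputable def lcaN' (a b : V) : ℕ :=
  @Nat.find (fun n => t.desc (t.parent^[n] a) b) (Classical.decPred _) (lca_ex' t a b)

/-- Least common ancestor. -/
noncomputable def lcaV (a b : V) : V := t.parent^[lcaN' t a b] a

lemma lcaV_desc_left (a b : V) : t.desc (lcaV t a b) a := ⟨_, rfl⟩

lemma lcaV_desc_right (a b : V) : t.desc (lcaV t a b) b :=
  @Nat.find_spec (fun n => t.desc (t.parent^[n] a) b) (Classical.decPred _) (lca_ex' t a b)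

lemma lcaV_greatest {a b w : V} (ha : t.desc w a) (hb : t.desc w b) : t.desc w (lcaV t a b) := by
  obtain ⟨j, hj⟩ := ha
  have hjb : t.desc (t.parent^[j] a) b := hj ▸ hb
  have hk : lcaN' t a b ≤ j :=
    @Nat.find_min' (fun n => t.desc (t.parent^[n] a) b) (Classical.decPred _) (lca_ex' t a b) j hjb
  refine ⟨j - lcaN' t a b, ?_⟩
  show t.parent^[j - lcaN' t a b] (t.parent^[lcaN' t a b] a) = w
  rw [← Function.iterate_add_apply, Nat.sub_add_cancel hk, hj]

lemma onPath_symm' {w u v : V} (h : t.onPath w u v) : t.onPath w v u := Or.symm h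

lemma covers_iff' (u v w : V) : covers t s(u, v) w ↔ t.onPath w u v := by
  constructor
  · rintro ⟨u', v', he, hp⟩
    rcases Sym2.eq_iff.mp he with ⟨rfl, rfl⟩ | ⟨rfl, rfl⟩
    · exact hp
    · exact onPath_symm' t hp
  · exact fun h => ⟨u, v, rfl, h⟩

/-- Case: `a` is an ancestor of `x` and of `c`, shared edge below toward `c`. -/
lemma case_down' {a x c c' w₀ : V} (hax : t.desc a x) (hac : t.desc a c)
    (hwx : t.desc w₀ x) (hwc : t.desc w₀ c) (hwa : ¬ t.desc w₀ a)
    (hl : ∀ w, t.desc w c → t.desc w c' → t.desc w a) :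
    ∃ z, (∀ w, t.onPath w z x → t.onPath w a x) ∧ ¬ t.onPath w₀ z x ∧
      (∀ w, t.onPath w a x → t.onPath w z x ∨ t.onPath w c c') := by
  have hzx : t.desc (lcaV t x c) x := lcaV_desc_left t x c
  have hzc : t.desc (lcaV t x c) c := lcaV_desc_right t x c
  have haz : t.desc a (lcaV t x c) := lcaV_greatest t hax hac
  refine ⟨lcaV t x c, ?_, ?_, ?_⟩
  · rintro w (⟨h1, h2⟩ | ⟨h1, h2⟩)
    · exact absurd (desc_trans' t hzx h1) h2
    · exact Or.inr ⟨h1, fun hwa' => h2 (desc_trans' t haz hwa')⟩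
  · rintro (⟨h1, h2⟩ | ⟨h1, h2⟩)
    · exact h2 hwx
    · exact h2 (lcaV_greatest t hwx hwc)
  · rintro w (⟨h1, h2⟩ | ⟨h1, h2⟩)
    · exact absurd (desc_trans' t hax h1) h2
    · by_cases hwz : t.desc w (lcaV t x c)
      · exact Or.inr (Or.inl ⟨desc_trans' t hzc hwz,
          fun hc' => h2 (hl w (desc_trans' t hzc hwz) hc')⟩)
      · exact Or.inl (Or.inr ⟨h1, hwz⟩)

lemma exists_shadow_end_aux' {a x b y w₀ : V} (hab : t.desc a b)
    (hl : ∀ w, t.desc w b → t.desc w y → t.desc w a)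
    (h1 : t.onPath w₀ a x) (h2 : t.onPath w₀ b y) :
    ∃ z, (∀ w, t.onPath w z x → t.onPath w a x) ∧ ¬ t.onPath w₀ z x ∧
      (∀ w, t.onPath w a x → t.onPath w z x ∨ t.onPath w b y) := by
  by_cases hax : t.desc a x
  · -- `x` lies below `a`
    have hwx : t.desc w₀ x ∧ ¬ t.desc w₀ a := by
      rcases h1 with ⟨hwa', hx'⟩ | ⟨hx', hwa'⟩
      · exact absurd (desc_trans' t hax hwa') hx'
      · exact ⟨hx', hwa'⟩
    rcases h2 with ⟨hwb, hwy⟩ | ⟨hwy, hwb⟩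
    · exact case_down' t hax hab hwx.1 hwb hwx.2 hl
    · have haw : t.desc a w₀ := by
        rcases desc_comparable' t hax hwx.1 with h | h
        · exact h
        · exact absurd h hwx.2
      have hay : t.desc a y := desc_trans' t hwy haw
      obtain ⟨z, p1, p2, p3⟩ :=
        case_down' t hax hay hwx.1 hwy hwx.2 (fun w h h' => hl w h' h)
      exact ⟨z, p1, p2, fun w hw => (p3 w hw).imp id (onPath_symm' t)⟩
  · rcases h1 with ⟨hwa, hwx⟩ | ⟨hwx, hwa⟩
    · -- 2A: shared edge is above `a`
      have hwb : t.desc w₀ b := desc_trans' t hab hwa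
      have hwy : ¬ t.desc w₀ y := by
        rcases h2 with ⟨_, h⟩ | ⟨_, h⟩
        · exact h
        · exact absurd hwb h
      have hna : t.desc (lcaV t a x) a := lcaV_desc_left t a x
      have hnx : t.desc (lcaV t a x) x := lcaV_desc_right t a x
      have hma : t.desc (lcaV t b y) a :=
        hl _ (lcaV_desc_left t b y) (lcaV_desc_right t b y)
      rcases desc_comparable' t hma hna with hmn | hnm
      · -- z = lca a x
        refine ⟨lcaV t a x, ?_, ?_, ?_⟩
        · rintro w (⟨h1', h2'⟩ | ⟨h1', h2'⟩)
          · exact absurd (desc_trans' t hnx h1') h2'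
          · exact Or.inr ⟨h1', fun hwa' => h2' (lcaV_greatest t hwa' h1')⟩
        · rintro (⟨h1', h2'⟩ | ⟨h1', h2'⟩)
          · exact h2' (desc_trans' t hnx h1')
          · exact hwx h1'
        · rintro w (⟨h1', h2'⟩ | ⟨h1', h2'⟩)
          · exact Or.inr (Or.inl ⟨desc_trans' t hab h1', fun hy =>
              h2' (desc_trans' t hnx (desc_trans' t hmn
                (lcaV_greatest t (desc_trans' t hab h1') hy)))⟩)
          · exact Or.inl (Or.inr ⟨h1', fun hwn => h2' (desc_trans' t hna hwn)⟩)
      · -- z = lca b y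
        have hmb : t.desc (lcaV t b y) b := lcaV_desc_left t b y
        have hmy : t.desc (lcaV t b y) y := lcaV_desc_right t b y
        refine ⟨lcaV t b y, ?_, ?_, ?_⟩
        · rintro w (⟨h1', h2'⟩ | ⟨h1', h2'⟩)
          · exact Or.inl ⟨desc_trans' t hma h1', h2'⟩
          · exact Or.inr ⟨h1', fun hwa' =>
              h2' (desc_trans' t hnm (lcaV_greatest t hwa' h1'))⟩
        · rintro (⟨h1', h2'⟩ | ⟨h1', h2'⟩)
          · exact hwy (desc_trans' t hmy h1')
          · exact hwx h1'
        · rintro w (⟨h1', h2'⟩ | ⟨h1', h2'⟩)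
          · by_cases hwm : t.desc w (lcaV t b y)
            · exact Or.inl (Or.inl ⟨hwm, h2'⟩)
            · exact Or.inr (Or.inl ⟨desc_trans' t hab h1', fun hy =>
                hwm (lcaV_greatest t (desc_trans' t hab h1') hy)⟩)
          · exact Or.inl (Or.inr ⟨h1', fun hwm => h2' (desc_trans' t hma hwm)⟩)
    · -- 2B: shared edge is on the `x`-side
      have hwyb : t.desc w₀ y ∧ ¬ t.desc w₀ b := by
        rcases h2 with ⟨hwb, hy⟩ | ⟨hy, hwb⟩
        · exfalso
          rcases desc_comparable' t hwb hab with h | h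
          · exact hwa h
          · exact hax (desc_trans' t hwx h)
        · exact ⟨hy, hwb⟩
      have hma : t.desc (lcaV t b y) a :=
        hl _ (lcaV_desc_left t b y) (lcaV_desc_right t b y)
      have hw₀p : t.desc w₀ (lcaV t x y) := lcaV_greatest t hwx hwyb.1
      have hpx : t.desc (lcaV t x y) x := lcaV_desc_left t x y
      have hpy : t.desc (lcaV t x y) y := lcaV_desc_right t x y
      have hmp : t.desc (lcaV t b y) (lcaV t x y) := by
        rcases desc_comparable' t (lcaV_desc_right t b y) hpy with h | h
        · exact h
        · exact absurd (desc_trans' t hma (desc_trans' t h hw₀p)) hwa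
      refine ⟨lcaV t x y, ?_, ?_, ?_⟩
      · rintro w (⟨h1', h2'⟩ | ⟨h1', h2'⟩)
        · exact absurd (desc_trans' t hpx h1') h2'
        · refine Or.inr ⟨h1', fun hwa' => ?_⟩
          rcases desc_comparable' t h1' hpx with h | h
          · exact h2' h
          · have hpa : t.desc (lcaV t x y) a := desc_trans' t hwa' h
            have hpm : t.desc (lcaV t x y) (lcaV t b y) :=
              lcaV_greatest t (desc_trans' t hab hpa) hpy
            have hme : lcaV t b y = lcaV t x y := desc_antisymm' t hmp hpm
            exact hwa (desc_trans' t hma (hme ▸ hw₀p))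
      · rintro (⟨h1', h2'⟩ | ⟨h1', h2'⟩)
        · exact h2' hwx
        · exact h2' hw₀p
      · rintro w (⟨h1', h2'⟩ | ⟨h1', h2'⟩)
        · exact Or.inr (Or.inl ⟨desc_trans' t hab h1', fun hy =>
            h2' (desc_trans' t hpx (desc_trans' t hmp
              (lcaV_greatest t (desc_trans' t hab h1') hy)))⟩)
        · by_cases hwp : t.desc w (lcaV t x y)
          · exact Or.inr (Or.inr ⟨desc_trans' t hpy hwp, fun hb =>
              h2' (desc_trans' t hma (lcaV_greatest t hb (desc_trans' t hpy hwp)))⟩)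
          · exact Or.inl (Or.inr ⟨h1', hwp⟩)

lemma exists_shadow_end' {a x b y w₀ : V} (hnode : t.onPathNode a b y)
    (h1 : t.onPath w₀ a x) (h2 : t.onPath w₀ b y) :
    ∃ z, (∀ w, t.onPath w z x → t.onPath w a x) ∧ ¬ t.onPath w₀ z x ∧
      (∀ w, t.onPath w a x → t.onPath w z x ∨ t.onPath w b y) := by
  obtain ⟨hor, hlca⟩ := hnode
  rcases hor with hab | hay
  · exact exists_shadow_end_aux' t hab (fun w hb hy => hlca w hb hy) h1 h2
  · obtain ⟨z, p1, p2, p3⟩ :=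
      exists_shadow_end_aux' t hay (fun w hy hb => hlca w hb hy) h1 (onPath_symm' t h2)
    exact ⟨z, p1, p2, fun w hw => (p3 w hw).imp id (onPath_symm' t)⟩

lemma key_no_overlap' {F : Finset (Sym2 V)}
    (hSM : ShadowsMinimal t F) {a x b y w₀ : V}
    (haxF : s(a, x) ∈ F) (hbyF : s(b, y) ∈ F) (hne : s(a, x) ≠ s(b, y))
    (h1 : t.onPath w₀ a x) (h2 : t.onPath w₀ b y)
    (hnode : t.onPathNode a b y) : False := by
  obtain ⟨z, hP1, hP2, hP3⟩ := exists_shadow_end' t hnode h1 h2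
  have hPS : ProperShadow t s(z, x) s(a, x) := by
    refine ⟨fun w hc => (covers_iff' t a x w).mpr (hP1 w ((covers_iff' t z x w).mp hc)),
      w₀, (covers_iff' t a x w₀).mpr h1, fun hc => hP2 ((covers_iff' t z x w₀).mp hc)⟩
  refine hSM.2.2 s(a, x) haxF s(z, x) hPS ?_
  intro w hw
  obtain ⟨e, heF, hce⟩ := hSM.1 w hw
  by_cases he : e = s(a, x)
  · subst he
    rcases hP3 w ((covers_iff' t a x w).mp hce) with h | h
    · exact ⟨s(z, x), Finset.mem_insert_self _ _, (covers_iff' t z x w).mpr h⟩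
    · exact ⟨s(b, y), Finset.mem_insert_of_mem (Finset.mem_erase.mpr ⟨Ne.symm hne, hbyF⟩),
        (covers_iff' t b y w).mpr h⟩
  · exact ⟨e, Finset.mem_insert_of_mem (Finset.mem_erase.mpr ⟨he, heF⟩), hce⟩

end NoOverlapAux

/-- `F` a fixed optimal shadows-minimal cover of `T` with the maximum number of
twin links.  Then no link of `F` overlaps another: there are no two distinct links
`ax, by ∈ F` such that `P(ax)` and `P(by)` share an edge and one of `a, x` lies on `P(by)`. -/
theorem no_overlap (t : Tree V) (E F : Finset (Sym2 V))
    (hnd : ∀ e ∈ E, ¬ e.IsDiag) (hsh : ShadowClosed t E) (hF : IsGoodCover t E F) :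
    ∀ a x b y : V, s(a, x) ∈ F → s(b, y) ∈ F → s(a, x) ≠ s(b, y) →
      ¬ ((∃ w, w ≠ t.root ∧ covers t (s(a, x)) w ∧ covers t (s(b, y)) w) ∧
          (t.onPathNode a b y ∨ t.onPathNode x b y)) := by
  intro a x b y haxF hbyF hne
  rintro ⟨⟨w₀, hw₀, hc1, hc2⟩, hnode | hnode⟩
  · exact key_no_overlap' t hF.2.1 haxF hbyF hne
      ((covers_iff' t a x w₀).mp hc1) ((covers_iff' t b y w₀).mp hc2) hnode
  · exact key_no_overlap' t hF.2.1 (by rw [Sym2.eq_swap]; exact haxF) hbyF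
      (by rw [Sym2.eq_swap]; exact hne)
      (onPath_symm' t ((covers_iff' t a x w₀).mp hc1))
      ((covers_iff' t b y w₀).mp hc2) hnode

end TAP
end

section
/- Let F be a fixed optimal shadows-minimal cover of T with the maximum number of twin links. Let a,b be twins with stem s, let T_s = P(sa) ∪ P(sb) be the subtree of T rooted at s, and let F' be the set of links of F with at least one endpoint in T_s. Then either F' = {ab, sz} for some node z ∉ T_s, or F' = {ax, by} for some nodes x, y ∉ T_s. -/
open scoped Classical

/-!
Every node of the subtree `T_st` lies on the path from `st` to `a` or to `b`, so every tree edge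
inside `T_st` is covered by `ab`. In a shadows-minimal cover, a link with an end in `T_st` whose
inner edges are covered by other links has the form `st z` with `z ∉ T_st` (otherwise it could
be dropped, or shortened to `st z`), and it is then the only link covering the edge above `st`
(otherwise it could be shortened to `(parent st) z`). If `ab ∈ F`, this leaves exactly `ab` and
one link `st z`. If `ab ∉ F`, the links `ax`, `by` of `F` at the twins leave `T_st`: a link `ax`
inside `T_st` is a shadow of `ab`, and swapping it for `ab` gives an optimal cover with more twin
links, which can be made shadows-minimal without losing twin links. Then `ax` and `by` cover the
inner edges and the edge above `st`, so no other link of `F` reaches `T_st`.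
-/

namespace TAP

namespace Tree

variable {V : Type} {t : Tree V} {u v w a b x : V}

variable (t) in
lemma desc_refl (v : V) : t.desc v v := ⟨0, rfl⟩

variable (t) in
lemma desc_parent (v : V) : t.desc (t.parent v) v := ⟨1, rfl⟩

variable (t) in
lemma desc_root (v : V) : t.desc t.root v := t.reach v

lemma desc.trans (h₁ : t.desc u v) (h₂ : t.desc v w) : t.desc u w := by
  obtain ⟨n, rfl⟩ := h₂
  obtain ⟨m, rfl⟩ := h₁
  exact ⟨m + n, Function.iterate_add_apply _ _ _ _⟩

lemma eq_root_of_iterate_eq {n : ℕ} (hn : 0 < n) (h : t.parent^[n] v = v) : v = t.root := by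
  obtain ⟨k, hk⟩ := t.reach v
  have hper : t.parent^[n * k] v = v := (Function.IsPeriodicPt.mul_const h k).eq
  have hkn : k ≤ n * k := Nat.le_mul_of_pos_left k hn
  rw [← hper, ← Nat.sub_add_cancel hkn, Function.iterate_add_apply, hk,
    Function.iterate_fixed t.parent_root]

lemma desc_antisymm (h₁ : t.desc u v) (h₂ : t.desc v u) : u = v := by
  obtain ⟨n, hn⟩ := h₁
  obtain ⟨m, hm⟩ := h₂
  rcases Nat.eq_zero_or_pos n with rfl | hpos
  · exact hn.symm
  · have hu : u = t.root := eq_root_of_iterate_eq (Nat.add_pos_left hpos m)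
      (by rw [Function.iterate_add_apply, hm, hn])
    subst hu
    rw [← hm, Function.iterate_fixed t.parent_root]

lemma eq_root_of_desc_root (h : t.desc v t.root) : v = t.root :=
  desc_antisymm h (t.desc_root v)

lemma desc_total (h₁ : t.desc u w) (h₂ : t.desc v w) : t.desc u v ∨ t.desc v u := by
  obtain ⟨n, rfl⟩ := h₁
  obtain ⟨m, rfl⟩ := h₂
  rcases le_total n m with h | h
  · exact Or.inr ⟨m - n, by rw [← Function.iterate_add_apply, Nat.sub_add_cancel h]⟩
  · exact Or.inl ⟨n - m, by rw [← Function.iterate_add_apply, Nat.sub_add_cancel h]⟩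

lemma desc_parent_of_ne (h : t.desc u v) (hne : u ≠ v) : t.desc u (t.parent v) := by
  obtain ⟨_ | n, rfl⟩ := h
  · exact absurd rfl hne
  · exact ⟨n, (Function.iterate_succ_apply _ _ _).symm⟩

lemma not_desc_parent (hv : v ≠ t.root) : ¬ t.desc v (t.parent v) := fun h =>
  hv (eq_root_of_iterate_eq (n := 1) one_pos (desc_antisymm (t.desc_parent v) h))

lemma IsLeaf.eq_of_desc (ha : t.IsLeaf a) (h : t.desc a x) : x = a := by
  obtain ⟨_ | n, hn⟩ := h
  · exact hn
  · rw [Function.iterate_succ_apply'] at hn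
    exfalso
    by_cases hp : t.parent^[n] x = a
    · rw [hp] at hn
      exact not_desc_parent ha.1 ⟨0, hn⟩
    · exact ha.2 _ hp hn

variable (t) in
lemma exists_isLCA (a b : V) : ∃ s, t.IsLCA s a b := by
  have hex : ∃ n, t.desc (t.parent^[n] a) b :=
    ⟨_, by rw [(t.reach a).choose_spec]; exact t.desc_root b⟩
  refine ⟨t.parent^[Nat.find hex] a, ⟨_, rfl⟩, Nat.find_spec hex, ?_⟩
  rintro _ ⟨m, rfl⟩ hb
  exact ⟨m - Nat.find hex, by
    rw [← Function.iterate_add_apply, Nat.sub_add_cancel (Nat.find_min' hex hb)]⟩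

lemma IsLCA.symm {s : V} (h : t.IsLCA s a b) : t.IsLCA s b a :=
  ⟨h.2.1, h.1, fun w h₁ h₂ => h.2.2 w h₂ h₁⟩

end Tree

section Covers

variable {V : Type} {t : Tree V} {F G : Finset (Sym2 V)} {e e' : Sym2 V} {s u w z : V}

lemma covers_mk_iff : covers t s(u, z) w ↔ t.onPath w u z := by
  refine ⟨?_, fun h => ⟨u, z, rfl, h⟩⟩
  rintro ⟨u', z', he, h⟩
  rcases Sym2.eq_iff.mp he with ⟨rfl, rfl⟩ | ⟨rfl, rfl⟩
  · exact h
  · exact h.symm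

lemma covers_mk_of_desc (hu : t.desc w u) (hz : ¬ t.desc w z) : covers t s(u, z) w :=
  covers_mk_iff.2 (Or.inl ⟨hu, hz⟩)

lemma exists_mem_desc_of_covers (h : covers t e w) : ∃ u ∈ e, t.desc w u := by
  obtain ⟨u, z, rfl, ⟨hu, -⟩ | ⟨hz, -⟩⟩ := h
  · exact ⟨u, Sym2.mem_mk_left u z, hu⟩
  · exact ⟨z, Sym2.mem_mk_right u z, hz⟩

lemma not_covers_of_isDiag (he : e.IsDiag) : ¬ covers t e w := by
  rintro ⟨u, z, rfl, h⟩
  obtain rfl := Sym2.mk_isDiag_iff.1 he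
  rcases h with ⟨h₁, h₂⟩ | ⟨h₁, h₂⟩ <;> exact h₂ h₁

lemma covers_leaf_iff (hu : t.IsLeaf u) : covers t e u ↔ u ∈ e ∧ ¬ e.IsDiag := by
  refine ⟨fun h => ⟨?_, fun hd => not_covers_of_isDiag hd h⟩, fun ⟨hue, hd⟩ => ?_⟩
  · obtain ⟨x, hx, hux⟩ := exists_mem_desc_of_covers h
    rwa [← hu.eq_of_desc hux]
  · obtain ⟨z, rfl⟩ := Sym2.mem_iff_exists.1 hue
    exact covers_mk_of_desc (t.desc_refl u) fun h =>
      hd (Sym2.mk_isDiag_iff.2 (hu.eq_of_desc h).symm)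

lemma coveredBy.mono (h : coveredBy t F w) (hFG : F ⊆ G) : coveredBy t G w :=
  let ⟨e, he, hw⟩ := h
  ⟨e, hFG he, hw⟩

lemma IsCover.mono (h : IsCover t F) (hFG : F ⊆ G) : IsCover t G :=
  fun w hw => (h w hw).mono hFG

lemma ProperShadow.ne (h : ProperShadow t e' e) : e' ≠ e := by
  rintro rfl
  obtain ⟨-, w, hw, hnw⟩ := h
  exact hnw hw

lemma onPath_inside (hu : t.desc s u) (hz : t.desc s z) (h : t.onPath w u z) :
    t.desc s w ∧ w ≠ s := by
  have key : ∀ {u z}, t.desc s u → t.desc s z → t.desc w u → ¬ t.desc w z →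
      t.desc s w ∧ w ≠ s := fun hu hz' h₁ h₂ => by
    rcases t.desc_total h₁ hu with hws | hsw
    · exact absurd (hws.trans hz') h₂
    · exact ⟨hsw, by rintro rfl; exact h₂ hz'⟩
  rcases h with ⟨h₁, h₂⟩ | ⟨h₁, h₂⟩
  · exact key hu hz h₁ h₂
  · exact key hz hu h₁ h₂

lemma onPath_or_inside_of_desc (hs : t.desc s u) (h : t.onPath w u z) :
    t.onPath w s z ∨ (t.desc s w ∧ w ≠ s) := by
  rcases h with ⟨h₁, h₂⟩ | ⟨h₁, h₂⟩
  · rcases t.desc_total h₁ hs with hws | hsw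
    · exact Or.inl (Or.inl ⟨hws, h₂⟩)
    · by_cases hwe : w = s
      · exact Or.inl (Or.inl ⟨hwe ▸ t.desc_refl w, h₂⟩)
      · exact Or.inr ⟨hsw, hwe⟩
  · exact Or.inl (Or.inr ⟨h₁, fun hws => h₂ (hws.trans hs)⟩)

lemma onPath_parent_or_eq (h : t.onPath w s z) :
    t.onPath w (t.parent s) z ∨ w = s := by
  rcases h with ⟨h₁, h₂⟩ | ⟨h₁, h₂⟩
  · by_cases hws : w = s
    · exact Or.inr hws
    · exact Or.inl (Or.inl ⟨t.desc_parent_of_ne h₁ hws, h₂⟩)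
  · exact Or.inl (Or.inr ⟨h₁, fun hp => h₂ (hp.trans (t.desc_parent s))⟩)

lemma properShadow_parent (hs : s ≠ t.root) (hz : ¬ t.desc s z) :
    ProperShadow t s(t.parent s, z) s(s, z) := by
  refine ⟨fun w hw => ?_, s, covers_mk_of_desc (t.desc_refl s) hz, fun h => ?_⟩
  · rw [covers_mk_iff] at hw ⊢
    rcases hw with ⟨h₁, h₂⟩ | ⟨h₁, h₂⟩
    · exact Or.inl ⟨h₁.trans (t.desc_parent s), h₂⟩
    · refine Or.inr ⟨h₁, fun hw => ?_⟩
      by_cases hws : w = s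
      · exact hz (hws ▸ h₁)
      · exact h₂ (t.desc_parent_of_ne hw hws)
  · rcases covers_mk_iff.1 h with ⟨h₁, -⟩ | ⟨h₁, -⟩
    · exact Tree.not_desc_parent hs h₁
    · exact hz h₁

lemma properShadow_of_desc (hu : t.desc s u) (hus : u ≠ s) (hz : ¬ t.desc s z) :
    ProperShadow t s(s, z) s(u, z) := by
  have hzu : ¬ t.desc u z := fun h => hz (hu.trans h)
  refine ⟨fun w hw => ?_, u, covers_mk_of_desc (t.desc_refl u) hzu, fun h => ?_⟩
  · rw [covers_mk_iff] at hw ⊢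
    rcases hw with ⟨h₁, h₂⟩ | ⟨h₁, h₂⟩
    · exact Or.inl ⟨h₁.trans hu, h₂⟩
    · refine Or.inr ⟨h₁, fun hw => ?_⟩
      rcases t.desc_total hw hu with hws | hsw
      · exact h₂ hws
      · exact hz (hsw.trans h₁)
  · rcases covers_mk_iff.1 h with ⟨h₁, -⟩ | ⟨h₁, -⟩
    · exact hus (Tree.desc_antisymm h₁ hu)
    · exact hzu h₁

lemma exists_mem_of_isLeaf (hF : IsCover t F) (hu : t.IsLeaf u) : ∃ z, s(u, z) ∈ F := by
  obtain ⟨e, he, hu'⟩ := hF u hu.1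
  obtain ⟨z, rfl⟩ := Sym2.mem_iff_exists.1 ((covers_leaf_iff hu).1 hu').1
  exact ⟨z, he⟩

variable [DecidableEq V]

lemma isCover_of_erase_subset (hF : IsCover t F)
    (he : ∀ w, w ≠ t.root → covers t e w → coveredBy t G w) (hG : F.erase e ⊆ G) :
    IsCover t G := by
  intro w hw
  obtain ⟨f, hf, hfw⟩ := hF w hw
  by_cases hfe : f = e
  · exact he w hw (hfe ▸ hfw)
  · exact ⟨f, hG (Finset.mem_erase.2 ⟨hfe, hf⟩), hfw⟩

lemma not_isDiag_of_not_isCover_erase (hF : IsCover t F) (he : ¬ IsCover t (F.erase e)) :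
    ¬ e.IsDiag := fun hd =>
  he (isCover_of_erase_subset hF (fun _ _ hw => absurd hw (not_covers_of_isDiag hd)) subset_rfl)

lemma not_isCover_erase_of_forall_card_le {E : Finset (Sym2 V)}
    (hopt : ∀ G' ⊆ E, IsCover t G' → F.card ≤ G'.card) (hFE : F ⊆ E) (he : e ∈ F) :
    ¬ IsCover t (F.erase e) := fun h => by
  have := hopt _ ((Finset.erase_subset e F).trans hFE) h
  rw [Finset.card_erase_of_mem he] at this
  have := Finset.card_pos.2 ⟨e, he⟩
  omega

lemma isCover_replace_parent (hF : IsCover t F)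
    (hs : coveredBy t (F.erase s(s, z)) s) :
    IsCover t (insert s(t.parent s, z) (F.erase s(s, z))) := by
  refine isCover_of_erase_subset hF (fun w _ hw => ?_) (Finset.subset_insert _ _)
  rcases onPath_parent_or_eq (covers_mk_iff.1 hw) with h | rfl
  · exact ⟨_, Finset.mem_insert_self _ _, covers_mk_iff.2 h⟩
  · exact hs.mono (Finset.subset_insert _ _)

lemma isCover_replace_of_desc (hF : IsCover t F) (hu : t.desc s u)
    (hin : ∀ w, t.desc s w → w ≠ s → coveredBy t (F.erase s(u, z)) w) :
    IsCover t (insert s(s, z) (F.erase s(u, z))) := by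
  refine isCover_of_erase_subset hF (fun w _ hw => ?_) (Finset.subset_insert _ _)
  rcases onPath_or_inside_of_desc hu (covers_mk_iff.1 hw) with h | ⟨hsw, hws⟩
  · exact ⟨_, Finset.mem_insert_self _ _, covers_mk_iff.2 h⟩
  · exact (hin w hsw hws).mono (Finset.subset_insert _ _)

lemma ShadowsMinimal.not_coveredBy_erase (hF : ShadowsMinimal t F) (hs : s ≠ t.root)
    (hz : ¬ t.desc s z) (hf : s(s, z) ∈ F) : ¬ coveredBy t (F.erase s(s, z)) s := fun h =>
  hF.2.2 _ hf _ (properShadow_parent hs hz) (isCover_replace_parent hF.1 h)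

lemma ShadowsMinimal.eq_of_desc_of_mem (hF : ShadowsMinimal t F) (hf : s(u, z) ∈ F)
    (hu : t.desc s u) (hin : ∀ w, t.desc s w → w ≠ s → coveredBy t (F.erase s(u, z)) w) :
    u = s ∧ ¬ t.desc s z := by
  have hz : ¬ t.desc s z := fun hz => hF.2.1 _ hf <|
    isCover_of_erase_subset hF.1 (fun w _ hw =>
      let ⟨hsw, hws⟩ := onPath_inside hu hz (covers_mk_iff.1 hw)
      hin w hsw hws) subset_rfl
  exact ⟨by_contra fun hus => hF.2.2 _ hf _ (properShadow_of_desc hu hus hz)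
    (isCover_replace_of_desc hF.1 hu hin), hz⟩

end Covers

section Twins

variable {V : Type} {t : Tree V} {a b c d st u x y w : V}

lemma rel_mk : rel t {s(a, b)} a b :=
  fun _ _ hw => ⟨_, Finset.mem_singleton_self _, covers_mk_iff.2 hw⟩

lemma qleafRep_of_rel {I : Finset (Sym2 V)} (h : rel t I u x) (hu : qleafRep t I u) :
    qleafRep t I x := by
  have R := (relSetoid t I).iseqv
  exact ⟨fun hx => hu.1 (R.trans h hx), fun w hw => R.trans (hu.2 w (R.trans hw (R.symm h))) h⟩

lemma TwinPair.symm (h : TwinPair t a b) : TwinPair t b a :=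
  ⟨h.2.1, h.1, h.2.2.1.symm, by rw [Sym2.eq_swap]; exact qleafRep_of_rel rel_mk h.2.2.2⟩

lemma twinPair_of_isTwinLinkE (h : IsTwinLinkE t s(a, b)) : TwinPair t a b := by
  obtain ⟨a', b', he, h⟩ := h
  rcases Sym2.eq_iff.1 he with ⟨rfl, rfl⟩ | ⟨rfl, rfl⟩
  · exact h
  · exact h.symm

lemma stem_ne_root (hab : TwinPair t a b) (hst : t.IsLCA st a b) : st ≠ t.root := by
  rintro rfl
  refine hab.2.2.2.1 fun w hw hp => ⟨_, Finset.mem_singleton_self _, covers_mk_iff.2 ?_⟩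
  rcases hp with ⟨h₁, -⟩ | ⟨h₁, -⟩
  · exact Or.inl ⟨h₁, fun hb => hw (Tree.eq_root_of_desc_root (hst.2.2 w h₁ hb))⟩
  · exact absurd (Tree.eq_root_of_desc_root h₁) hw

lemma rel_of_desc_of_desc (hst : t.IsLCA st a b) (hu : t.desc st u) (hua : t.desc u a) :
    rel t {s(a, b)} u a := by
  rintro w - (⟨h₁, h₂⟩ | ⟨h₁, h₂⟩)
  · exact absurd (h₁.trans hua) h₂
  · exact ⟨_, Finset.mem_singleton_self _,
      covers_mk_of_desc h₁ fun hb => h₂ ((hst.2.2 w h₁ hb).trans hu)⟩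

/-- Going down from `st`: a node off the paths to `a` and `b` whose parent lies on them has its
edge uncovered by `ab` while its parent is identified with `a`, so the class of `a` would not be
a leaf after contracting `ab`. -/
lemma TwinPair.desc_or_desc (hab : TwinPair t a b) (hst : t.IsLCA st a b) (hx : t.desc st x) :
    t.desc x a ∨ t.desc x b := by
  obtain ⟨n, hn⟩ := hx
  induction n generalizing x with
  | zero =>
    subst hn
    exact Or.inl hst.1
  | succ n ih =>
    have hxr : x ≠ t.root := fun h =>
      stem_ne_root hab hst (Tree.eq_root_of_desc_root (h ▸ ⟨n + 1, hn⟩))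
    rw [Function.iterate_succ_apply] at hn
    have R := (relSetoid t {s(a, b)}).iseqv
    have hrel : rel t {s(a, b)} (t.parent x) a := by
      rcases ih hn with h | h
      · exact rel_of_desc_of_desc hst ⟨n, hn⟩ h
      · have hb := rel_of_desc_of_desc hst.symm ⟨n, hn⟩ h
        rw [Sym2.eq_swap] at hb
        exact R.trans hb (R.symm rel_mk)
    by_contra hx
    rw [not_or] at hx
    obtain ⟨e, he, hcov⟩ := hab.2.2.2.2 x hrel x hxr (Or.inl ⟨t.desc_refl x, hx.1⟩)
    rw [Finset.mem_singleton] at he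
    subst he
    rcases covers_mk_iff.1 hcov with ⟨h, -⟩ | ⟨h, -⟩
    · exact hx.1 h
    · exact hx.2 h

lemma TwinPair.eq_or_eq_of_isLeaf (hab : TwinPair t a b) (hst : t.IsLCA st a b)
    (hx : t.desc st x) (hlx : t.IsLeaf x) : x = a ∨ x = b :=
  (hab.desc_or_desc hst hx).imp (fun h => (hlx.eq_of_desc h).symm)
    (fun h => (hlx.eq_of_desc h).symm)

lemma TwinPair.unique (hcd : TwinPair t c d) (hcy : TwinPair t c y) : y = d := by
  obtain ⟨s₁, hs₁⟩ := t.exists_isLCA c d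
  obtain ⟨s₂, hs₂⟩ := t.exists_isLCA c y
  rcases t.desc_total hs₁.1 hs₂.1 with h | h
  · rcases hcd.eq_or_eq_of_isLeaf hs₁ (h.trans hs₂.2.1) hcy.2.1 with rfl | rfl
    · exact absurd rfl hcy.2.2.1
    · rfl
  · rcases hcy.eq_or_eq_of_isLeaf hs₂ (h.trans hs₁.2.1) hcd.2.1 with rfl | rfl
    · exact absurd rfl hcd.2.2.1
    · rfl

lemma covers_twinLink (hab : TwinPair t a b) (hst : t.IsLCA st a b) (hw : t.desc st w)
    (hws : w ≠ st) : covers t s(a, b) w := by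
  rw [covers_mk_iff]
  rcases hab.desc_or_desc hst hw with h | h
  · exact Or.inl ⟨h, fun hb => hws (Tree.desc_antisymm (hst.2.2 w h hb) hw)⟩
  · exact Or.inr ⟨h, fun ha => hws (Tree.desc_antisymm (hst.2.2 w ha h) hw)⟩

lemma shadow_twinLink (hab : TwinPair t a b) (hst : t.IsLCA st a b) (hx : t.desc st x) :
    Shadow t s(a, x) s(a, b) := by
  intro w hw
  rw [covers_mk_iff] at hw ⊢
  rcases hw with ⟨h₁, h₂⟩ | ⟨h₁, h₂⟩
  · exact Or.inl ⟨h₁, fun hb => h₂ ((hst.2.2 w h₁ hb).trans hx)⟩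
  · rcases hab.desc_or_desc hst hx with hxa | hxb
    · exact absurd (h₁.trans hxa) h₂
    · exact Or.inr ⟨h₁.trans hxb, h₂⟩

lemma onPathNode_stem_iff (hab : TwinPair t a b) (hst : t.IsLCA st a b) :
    (t.onPathNode x st a ∨ t.onPathNode x st b) ↔ t.desc st x := by
  refine ⟨fun h => h.elim (·.2 st (t.desc_refl st) hst.1) (·.2 st (t.desc_refl st) hst.2.1),
    fun h => ?_⟩
  rcases hab.desc_or_desc hst h with hx | hx
  · exact Or.inl ⟨Or.inr hx, fun w hw _ => hw.trans h⟩
  · exact Or.inr ⟨Or.inr hx, fun w hw _ => hw.trans h⟩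

end Twins

section TwinCount

variable {V : Type} {t : Tree V} {G : Finset (Sym2 V)} {e e' : Sym2 V} {c d : V}

lemma twinCount_mono {H : Finset (Sym2 V)} (h : G ⊆ H) : twinCount t G ≤ twinCount t H :=
  Finset.card_le_card (Finset.filter_subset_filter _ h)

variable [DecidableEq V]

lemma twinCount_erase (he : ¬ IsTwinLinkE t e) : twinCount t (G.erase e) = twinCount t G := by
  rw [twinCount, Finset.filter_erase, Finset.erase_eq_of_notMem (by simp [he]), twinCount]

lemma twinCount_insert (he : IsTwinLinkE t e) (hG : e ∉ G) :
    twinCount t (insert e G) = twinCount t G + 1 := by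
  rw [twinCount, Finset.filter_insert, if_pos he,
    Finset.card_insert_of_notMem (fun h => hG (Finset.mem_filter.1 h).1), twinCount]

lemma coveredBy_erase_of_properShadow_twinLink (hcd : TwinPair t c d)
    (hps : ProperShadow t e' s(c, d)) (hcov : IsCover t (insert e' (G.erase s(c, d)))) :
    coveredBy t (G.erase s(c, d)) c ∨ coveredBy t (G.erase s(c, d)) d := by
  obtain ⟨f, hf, hfc⟩ := hcov c hcd.1.1
  obtain ⟨g, hg, hgd⟩ := hcov d hcd.2.1.1
  rcases Finset.mem_insert.1 hf with rfl | hf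
  · rcases Finset.mem_insert.1 hg with rfl | hg
    · exact absurd ((Sym2.mem_and_mem_iff hcd.2.2.1).1
        ⟨((covers_leaf_iff hcd.1).1 hfc).1, ((covers_leaf_iff hcd.2.1).1 hgd).1⟩) hps.ne
    · exact Or.inr ⟨g, hg, hgd⟩
  · exact Or.inl ⟨f, hf, hfc⟩

end TwinCount

section Descent

variable {V : Type} [Fintype V] {t : Tree V} {E G : Finset (Sym2 V)} {e e' : Sym2 V}

noncomputable def linkLength (t : Tree V) (e : Sym2 V) : ℕ :=
  (Finset.univ.filter (covers t e)).card

noncomputable def totalLength (t : Tree V) (G : Finset (Sym2 V)) : ℕ :=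
  ∑ e ∈ G, linkLength t e

lemma ProperShadow.linkLength_lt (h : ProperShadow t e' e) : linkLength t e' < linkLength t e := by
  obtain ⟨hsh, w, hw, hnw⟩ := h
  refine Finset.card_lt_card (Finset.ssubset_iff_of_subset ?_ |>.2 ⟨w, ?_, ?_⟩)
  · exact Finset.monotone_filter_right _ fun w _ => hsh w
  · simpa using hw
  · simpa using hnw

variable [DecidableEq V]

lemma totalLength_insert_erase_lt (he : e ∈ G) (he' : e' ∉ G)
    (hlt : linkLength t e' < linkLength t e) :
    totalLength t (insert e' (G.erase e)) < totalLength t G := by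
  rw [totalLength, totalLength, Finset.sum_insert (fun h => he' (Finset.mem_of_mem_erase h)),
    ← Finset.add_sum_erase G _ he]
  omega

/-- Minimality of `G.card` forces the shadow to be a new, non-diagonal link. -/
lemma replace_properShadow (hsh : ShadowClosed t E)
    (hopt : ∀ G' ⊆ E, IsCover t G' → G.card ≤ G'.card) (hGE : G ⊆ E) (he : e ∈ G)
    (hps : ProperShadow t e' e) (hcov : IsCover t (insert e' (G.erase e))) :
    insert e' (G.erase e) ⊆ E ∧ (insert e' (G.erase e)).card = G.card ∧
      totalLength t (insert e' (G.erase e)) < totalLength t G := by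
  have hG : 0 < G.card := Finset.card_pos.2 ⟨e, he⟩
  have herase := not_isCover_erase_of_forall_card_le hopt hGE he
  have hnd : ¬ e'.IsDiag := not_isDiag_of_not_isCover_erase hcov fun h =>
    herase (h.mono (Finset.erase_insert_subset _ _))
  have hnew : e' ∉ G.erase e := fun h => herase (by rwa [Finset.insert_eq_of_mem h] at hcov)
  refine ⟨Finset.insert_subset (hsh e (hGE he) e' hnd hps.1) ((Finset.erase_subset e G).trans hGE),
    by rw [Finset.card_insert_of_notMem hnew, Finset.card_erase_of_mem he]; omega,
    totalLength_insert_erase_lt he (fun h => hnew (Finset.mem_erase.2 ⟨hps.ne, h⟩))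
      hps.linkLength_lt⟩

/-- Take such a cover of minimum total length. Shortening a non-twin link keeps all twin links;
if a twin link `cd` can be shortened, then some other link `cy` covers the edge above `c` (or
`d`), and since `cy` is not a twin link it can be shortened to `(parent c) y` instead. -/
lemma exists_shadowsMinimal_of_lt_twinCount (hsh : ShadowClosed t E)
    (hopt : ∀ G' ⊆ E, IsCover t G' → G.card ≤ G'.card) (hGE : G ⊆ E) (hG : IsCover t G)
    {n : ℕ} (hn : n < twinCount t G) :
    ∃ H ⊆ E, ShadowsMinimal t H ∧ H.card = G.card ∧ n < twinCount t H := by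
  set S := Finset.univ.filter fun H : Finset (Sym2 V) =>
    H ⊆ E ∧ IsCover t H ∧ H.card = G.card ∧ n < twinCount t H
  obtain ⟨H, hHS, hmin⟩ := S.exists_min_image (totalLength t) ⟨G, by simp [S, hGE, hG, hn]⟩
  simp only [S, Finset.mem_filter, Finset.mem_univ, true_and] at hHS hmin
  obtain ⟨hHE, hH, hcard, hnH⟩ := hHS
  rw [← hcard] at hopt
  have htwin : ∀ e ∈ H, ∀ e', ProperShadow t e' e → IsCover t (insert e' (H.erase e)) →
      IsTwinLinkE t e := fun e he e' hps hcov => by_contra fun hnt => by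
    obtain ⟨hsub, hcard', hlt⟩ := replace_properShadow hsh hopt hHE he hps hcov
    have hnH' : n < twinCount t (insert e' (H.erase e)) :=
      hnH.trans_le ((twinCount_erase hnt).symm.le.trans (twinCount_mono (Finset.subset_insert _ _)))
    have := hmin _ ⟨hsub, hcov, hcard'.trans hcard, hnH'⟩
    omega
  have hpatch : ∀ c d, TwinPair t c d → s(c, d) ∈ H → ¬ coveredBy t (H.erase s(c, d)) c := by
    rintro c d hcd hcdH ⟨g, hg, hgc⟩
    obtain ⟨hgne, hgH⟩ := Finset.mem_erase.1 hg
    obtain ⟨y, rfl⟩ := Sym2.mem_iff_exists.1 ((covers_leaf_iff hcd.1).1 hgc).1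
    have hy : ¬ t.desc c y := (covers_mk_iff.1 hgc).elim (·.2) fun h => absurd (t.desc_refl c) h.2
    have hrep := isCover_replace_parent hH
      ⟨s(c, d), Finset.mem_erase.2 ⟨hgne.symm, hcdH⟩,
        covers_mk_of_desc (t.desc_refl c) fun h => hcd.2.2.1 (hcd.1.eq_of_desc h).symm⟩
    have hcy := twinPair_of_isTwinLinkE (htwin _ hgH _ (properShadow_parent hcd.1.1 hy) hrep)
    exact hgne (by rw [hcd.unique hcy])
  refine ⟨H, hHE, ⟨hH, fun e he => not_isCover_erase_of_forall_card_le hopt hHE he,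
    fun e he e' hps hcov => ?_⟩, hcard, hnH⟩
  obtain ⟨c, d, rfl, hcd⟩ := htwin e he e' hps hcov
  rcases coveredBy_erase_of_properShadow_twinLink hcd hps hcov with h | h
  · exact hpatch c d hcd he h
  · rw [Sym2.eq_swap] at he h
    exact hpatch d c hcd.symm he h

end Descent

section Structure

variable {V : Type} [DecidableEq V] {t : Tree V} {F : Finset (Sym2 V)} {a b st : V}

lemma ShadowsMinimal.filter_subtree_eq_of_twinLink_mem (hF : ShadowsMinimal t F)
    (hab : TwinPair t a b) (hst : t.IsLCA st a b) (habF : s(a, b) ∈ F) :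
    ∃ z, ¬ t.desc st z ∧ F.filter (fun e => ∃ x ∈ e, t.desc st x) = {s(a, b), s(st, z)} := by
  have hroot := stem_ne_root hab hst
  have hstem : ∀ f ∈ F, f ≠ s(a, b) → ∀ u ∈ f, t.desc st u →
      ∃ z, ¬ t.desc st z ∧ f = s(st, z) := by
    rintro f hf hne u hu hsu
    obtain ⟨z, rfl⟩ := Sym2.mem_iff_exists.1 hu
    obtain ⟨rfl, hz⟩ := hF.eq_of_desc_of_mem hf hsu fun w hw hws =>
      ⟨s(a, b), Finset.mem_erase.2 ⟨hne.symm, habF⟩, covers_twinLink hab hst hw hws⟩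
    exact ⟨z, hz, rfl⟩
  obtain ⟨f₀, hf₀, hcov₀⟩ := hF.1 st hroot
  obtain ⟨u₀, hu₀, hsu₀⟩ := exists_mem_desc_of_covers hcov₀
  have hf₀ab : f₀ ≠ s(a, b) := by
    rintro rfl
    exact (onPath_inside hst.1 hst.2.1 (covers_mk_iff.1 hcov₀)).2 rfl
  obtain ⟨z₀, hz₀, rfl⟩ := hstem f₀ hf₀ hf₀ab u₀ hu₀ hsu₀
  refine ⟨z₀, hz₀, Finset.ext fun e => ?_⟩
  simp only [Finset.mem_filter, Finset.mem_insert, Finset.mem_singleton]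
  refine ⟨fun ⟨he, u, hu, hsu⟩ => or_iff_not_imp_left.2 fun hne => ?_, ?_⟩
  · obtain ⟨z, hz, rfl⟩ := hstem e he hne u hu hsu
    by_contra hne₀
    exact hF.not_coveredBy_erase hroot hz he ⟨_, Finset.mem_erase.2 ⟨Ne.symm hne₀, hf₀⟩, hcov₀⟩
  · rintro (rfl | rfl)
    · exact ⟨habF, a, Sym2.mem_mk_left _ _, hst.1⟩
    · exact ⟨hf₀, st, Sym2.mem_mk_left _ _, t.desc_refl st⟩

end Structure

variable {V : Type} [Fintype V] [DecidableEq V]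

lemma IsGoodCover.not_desc_of_mem {t : Tree V} {E F : Finset (Sym2 V)} {a b st x : V}
    (hF : IsGoodCover t E F) (hsh : ShadowClosed t E) (hab : TwinPair t a b)
    (habE : s(a, b) ∈ E) (hst : t.IsLCA st a b) (habF : s(a, b) ∉ F) (hx : s(a, x) ∈ F) :
    ¬ t.desc st x := by
  intro hxT
  obtain ⟨hFE, hsm, hopt, hmax⟩ := hF
  have hcov : IsCover t (insert s(a, b) (F.erase s(a, x))) :=
    isCover_of_erase_subset hsm.1 (fun w _ hw => ⟨s(a, b), Finset.mem_insert_self _ _,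
      shadow_twinLink hab hst hxT w hw⟩) (Finset.subset_insert _ _)
  have hnt : ¬ IsTwinLinkE t s(a, x) := fun h => by
    have hax := twinPair_of_isTwinLinkE h
    rcases hab.eq_or_eq_of_isLeaf hst hxT hax.2.1 with rfl | rfl
    · exact hax.2.2.1 rfl
    · exact habF hx
  have habF' : s(a, b) ∉ F.erase s(a, x) := fun h => habF (Finset.mem_of_mem_erase h)
  have hcard : (insert s(a, b) (F.erase s(a, x))).card = F.card := by
    rw [Finset.card_insert_of_notMem habF', Finset.card_erase_of_mem hx]
    have := Finset.card_pos.2 ⟨_, hx⟩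
    omega
  have htw : twinCount t F < twinCount t (insert s(a, b) (F.erase s(a, x))) := by
    rw [twinCount_insert ⟨a, b, rfl, hab⟩ habF', twinCount_erase hnt]
    omega
  rw [← hcard] at hopt
  obtain ⟨G, hGE, hG, hGcard, hGtw⟩ := exists_shadowsMinimal_of_lt_twinCount hsh hopt
    (Finset.insert_subset habE ((Finset.erase_subset _ F).trans hFE)) hcov htw
  exact (hmax G hGE hG (hGcard.trans hcard)).not_gt hGtw

lemma IsGoodCover.filter_subtree_eq_of_twinLink_not_mem {t : Tree V} {E F : Finset (Sym2 V)}
    {a b st : V} (hF : IsGoodCover t E F) (hsh : ShadowClosed t E) (hab : TwinPair t a b)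
    (habE : s(a, b) ∈ E) (hst : t.IsLCA st a b) (habF : s(a, b) ∉ F) :
    ∃ x y, ¬ t.desc st x ∧ ¬ t.desc st y ∧
      F.filter (fun e => ∃ x ∈ e, t.desc st x) = {s(a, x), s(b, y)} := by
  have hsm := hF.2.1
  obtain ⟨x, hx⟩ := exists_mem_of_isLeaf hsm.1 hab.1
  obtain ⟨y, hy⟩ := exists_mem_of_isLeaf hsm.1 hab.2.1
  have hxT := hF.not_desc_of_mem hsh hab habE hst habF hx
  have hyT := hF.not_desc_of_mem hsh hab.symm (by rwa [Sym2.eq_swap]) hst.symm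
    (by rwa [Sym2.eq_swap]) hy
  refine ⟨x, y, hxT, hyT, Finset.ext fun e => ?_⟩
  simp only [Finset.mem_filter, Finset.mem_insert, Finset.mem_singleton]
  refine ⟨fun ⟨he, u, hu, hsu⟩ => ?_, ?_⟩
  · by_contra hne
    rw [not_or] at hne
    have hxe : s(a, x) ∈ F.erase e := Finset.mem_erase.2 ⟨Ne.symm hne.1, hx⟩
    have hye : s(b, y) ∈ F.erase e := Finset.mem_erase.2 ⟨Ne.symm hne.2, hy⟩
    obtain ⟨z, rfl⟩ := Sym2.mem_iff_exists.1 hu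
    obtain ⟨rfl, hz⟩ := hsm.eq_of_desc_of_mem he hsu fun w hw _ =>
      (hab.desc_or_desc hst hw).elim
        (fun h => ⟨_, hxe, covers_mk_of_desc h fun h' => hxT (hw.trans h')⟩)
        (fun h => ⟨_, hye, covers_mk_of_desc h fun h' => hyT (hw.trans h')⟩)
    exact hsm.not_coveredBy_erase (stem_ne_root hab hst) hz he
      ⟨_, hxe, covers_mk_of_desc hst.1 hxT⟩
  · rintro (rfl | rfl)
    · exact ⟨hx, a, Sym2.mem_mk_left _ _, hst.1⟩
    · exact ⟨hy, b, Sym2.mem_mk_left _ _, hst.2.1⟩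

theorem twin_links_structure_general (t : Tree V) (E F : Finset (Sym2 V))
    (hsh : ShadowClosed t E) (hF : IsGoodCover t E F)
    (a b st : V) (hab : TwinPair t a b) (habE : s(a, b) ∈ E) (hst : t.IsLCA st a b) :
    (∃ z : V, ¬ (t.onPathNode z st a ∨ t.onPathNode z st b) ∧
        F.filter (fun e => ∃ x, x ∈ e ∧ (t.onPathNode x st a ∨ t.onPathNode x st b)) =
          {s(a, b), s(st, z)}) ∨
    (∃ x y : V, ¬ (t.onPathNode x st a ∨ t.onPathNode x st b) ∧
        ¬ (t.onPathNode y st a ∨ t.onPathNode y st b) ∧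
        F.filter (fun e => ∃ x', x' ∈ e ∧ (t.onPathNode x' st a ∨ t.onPathNode x' st b)) =
          {s(a, x), s(b, y)}) := by
  simp only [onPathNode_stem_iff hab hst]
  by_cases habF : s(a, b) ∈ F
  · left
    convert hF.2.1.filter_subtree_eq_of_twinLink_mem hab hst habF
  · right
    convert hF.filter_subtree_eq_of_twinLink_not_mem hsh hab habE hst habF

/-- for twins `a,b` with stem `st` and `T_st = P(st,a) ∪ P(st,b)`,
the set `F'` of links of `F` with an end in `T_st` is either `{ab, st z}` for some
`z ∉ T_st`, or `{ax, by}` for some `x, y ∉ T_st`. -/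
theorem twin_links_structure (t : Tree V) (E F : Finset (Sym2 V))
    (hnd : ∀ e ∈ E, ¬ e.IsDiag) (hsh : ShadowClosed t E) (hF : IsGoodCover t E F)
    (a b st : V) (hab : TwinPair t a b) (habE : s(a, b) ∈ E) (hst : t.IsLCA st a b) :
    (∃ z : V, ¬ (t.onPathNode z st a ∨ t.onPathNode z st b) ∧
        F.filter (fun e => ∃ x, x ∈ e ∧ (t.onPathNode x st a ∨ t.onPathNode x st b)) =
          {s(a, b), s(st, z)}) ∨
    (∃ x y : V, ¬ (t.onPathNode x st a ∨ t.onPathNode x st b) ∧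
        ¬ (t.onPathNode y st a ∨ t.onPathNode y st b) ∧
        F.filter (fun e => ∃ x', x' ∈ e ∧ (t.onPathNode x' st a ∨ t.onPathNode x' st b)) =
          {s(a, x), s(b, y)}) :=
  twin_links_structure_general t E F hsh hF a b st hab habE hst

end TAP
end
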